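/- The vector fields V₁ − λV₂ and V₂ − λV₃ (with V₁, V₂, V₃ as in the Veronese web of the Hirota equation) are both orthogonal to V(λ) = V₁ − 2λV₂ + λ²V₃ with respect to the metric h of the associated Weyl structure, for every λ. -/

import Mathlib

noncomputable section

abbrev Pt3 := Fin 3 → ℝ

/-- Partial derivative in the `j`-th coordinate direction. -/
def pd (j : Fin 3) (f : Pt3 → ℝ) (p : Pt3) : ℝ :=
  fderiv ℝ f p (Pi.single j 1)

/-- The covariant metric of the Weyl structure (1.4), as a matrix of coefficients
in coordinates (x,y,z); off-diagonal entries are half the `2·dx dy` etc. coefficients. -/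
def hMat (a b : ℝ) (w : Pt3 → ℝ) (p : Pt3) : Matrix (Fin 3) (Fin 3) ℝ :=
  !![pd 0 w p / (pd 1 w p * pd 2 w p),
      a / ((a - b) * pd 2 w p),
      -(b / ((a - b) * pd 1 w p));
    a / ((a - b) * pd 2 w p),
      a ^ 2 * pd 1 w p / ((a - b) ^ 2 * pd 0 w p * pd 2 w p),
      a * b / ((a - b) ^ 2 * pd 0 w p);
    -(b / ((a - b) * pd 1 w p)),
      a * b / ((a - b) ^ 2 * pd 0 w p),
      b ^ 2 * pd 2 w p / ((a - b) ^ 2 * pd 0 w p * pd 1 w p)]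

/-- Evaluation of the symmetric bilinear form `h` on two tangent vectors. -/
def hEval (a b : ℝ) (w : Pt3 → ℝ) (p : Pt3) (U V : Pt3) : ℝ :=
  ∑ i, ∑ j, U i * hMat a b w p i j * V j

/-- V₁ = ab(a w_y ∂_z − b w_z ∂_y). -/
def V1 (a b : ℝ) (w : Pt3 → ℝ) (p : Pt3) : Pt3 :=
  ![0, -(a * b * (b * pd 2 w p)), a * b * (a * pd 1 w p)]

/-- V₂ = ab(w_y ∂_z − w_z ∂_y). -/
def V2 (a b : ℝ) (w : Pt3 → ℝ) (p : Pt3) : Pt3 :=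
  ![0, -(a * b * pd 2 w p), a * b * pd 1 w p]

/-- V₃ = b w_y ∂_z − a w_z ∂_y + (a−b)(w_y w_z/w_x)∂_x. -/
def V3 (a b : ℝ) (w : Pt3 → ℝ) (p : Pt3) : Pt3 :=
  ![(a - b) * pd 1 w p * pd 2 w p / pd 0 w p, -(a * pd 2 w p), b * pd 1 w p]

/-- The Veronese curve V(λ) = V₁ − 2λV₂ + λ²V₃. -/
def Vlam (a b : ℝ) (w : Pt3 → ℝ) (lam : ℝ) (p : Pt3) : Pt3 :=
  V1 a b w p - (2 * lam) • V2 a b w p + lam ^ 2 • V3 a b w p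

set_option maxHeartbeats 1600000 in
theorem stmt4 (a b : ℝ) (ha : a ≠ 0) (hb : b ≠ 0) (hab : a ≠ b)
    (w : Pt3 → ℝ) (hw : ContDiff ℝ (⊤ : ℕ∞) w) (B : Set Pt3) (hB : IsOpen B)
    (hwx : ∀ p ∈ B, pd 0 w p ≠ 0) (hwy : ∀ p ∈ B, pd 1 w p ≠ 0)
    (hwz : ∀ p ∈ B, pd 2 w p ≠ 0) :
    ∀ lam : ℝ, ∀ p ∈ B,
      hEval a b w p (Vlam a b w lam p) (V1 a b w p - lam • V2 a b w p) = 0 ∧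
      hEval a b w p (Vlam a b w lam p) (V2 a b w p - lam • V3 a b w p) = 0 := by
  intro lam p hp
  have hx := hwx p hp
  have hy := hwy p hp
  have hz := hwz p hp
  have hab' : a - b ≠ 0 := sub_ne_zero.mpr hab
  set X := pd 0 w p with hX
  set Y := pd 1 w p with hY
  set Z := pd 2 w p with hZ
  constructor <;>
  · simp only [hEval, Fin.sum_univ_three, hMat, Vlam, V1, V2, V3,
      Pi.add_apply, Pi.sub_apply, Pi.smul_apply, smul_eq_mul,
      Matrix.cons_val_zero, Matrix.cons_val_one, Matrix.head_cons,
      Matrix.cons_val_two, Matrix.tail_cons,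
      Matrix.of_apply, Matrix.cons_val']
    rw [← hX, ← hY, ← hZ]
    field_simp
    ring
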